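/- Let {(Xᵢ,Yᵢ)}_{i=1}^n be i.i.d. with joint pmf p_{XY} on a product of finite alphabets 𝒳 × 𝒴, let ε, ε' > 0 and b₁ > b₀ > 0, and suppose ℙ[ f(Yⁿ) > ε' or f(Xⁿ,Yⁿ) > ε' ] ≤ 2^{−n b₁ ε}. Then ℙ[ (Xⁿ,Yⁿ) ∉ 𝒜̂_{ε,ε'}^{(n)}(X,Y) ] ≤ e^{n C_X^{(1)}(ε)} + e^{n C_X^{(2)}(ε)} + 2^{−n b₁ ε} + 2^{−n (b₁ − b₀) ε}. -/

import Mathlib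

open Finset Real
open scoped Classical BigOperators

/-- Shannon entropy (in bits) of a pmf on a finite alphabet, with the convention `0 log 0 = 0`. -/
noncomputable def shannonEntropy {W : Type*} [Fintype W] (q : W → ℝ) : ℝ :=
  - ∑ w, q w * Real.logb 2 (q w)

/-- Probability of an i.i.d. sequence: `p(wⁿ) = ∏ᵢ p(wᵢ)`. -/
noncomputable def seqProb {W : Type*} (q : W → ℝ) {n : ℕ} (w : Fin n → W) : ℝ :=
  ∏ i, q (w i)

/-- The deviation `f(wⁿ) = |−(1/n) log₂ p(wⁿ) − H(W)|` of the empirical entropy. -/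
noncomputable def fdev {W : Type*} [Fintype W] (q : W → ℝ) {n : ℕ} (w : Fin n → W) : ℝ :=
  |(-(1 / (n : ℝ))) * Real.logb 2 (seqProb q w) - shannonEntropy q|

/-- Chernoff exponent `C_W^{(1)}(ε) = inf_{s>0} ( ln 𝔼[q(W)^{−s/ln 2}] − s(H(W)+ε) )`. -/
noncomputable def chernoff1 {W : Type*} [Fintype W] (q : W → ℝ) (ε : ℝ) : ℝ :=
  sInf ((fun s : ℝ =>
    Real.log (∑ w ∈ Finset.univ.filter (fun w => 0 < q w), q w ^ (1 - s / Real.log 2))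
      - s * (shannonEntropy q + ε)) '' Set.Ioi 0)

/-- Chernoff exponent `C_W^{(2)}(ε) = inf_{s>0} ( ln 𝔼[q(W)^{s/ln 2}] − s(−H(W)+ε) )`. -/
noncomputable def chernoff2 {W : Type*} [Fintype W] (q : W → ℝ) (ε : ℝ) : ℝ :=
  sInf ((fun s : ℝ =>
    Real.log (∑ w ∈ Finset.univ.filter (fun w => 0 < q w), q w ^ (1 + s / Real.log 2))
      - s * (-shannonEntropy q + ε)) '' Set.Ioi 0)

/-- Marginal on the first component of a joint pmf. -/
noncomputable def margFst {X Y : Type*} [Fintype Y] (p : X × Y → ℝ) (x : X) : ℝ :=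
  ∑ y, p (x, y)

/-- Marginal on the second component of a joint pmf. -/
noncomputable def margSnd {X Y : Type*} [Fintype X] (p : X × Y → ℝ) (y : Y) : ℝ :=
  ∑ x, p (x, y)

/-- The sequence of pairs associated to a pair of sequences. -/
def pairSeq {X Y : Type*} {n : ℕ} (w : (Fin n → X) × (Fin n → Y)) : Fin n → X × Y :=
  fun i => (w.1 i, w.2 i)

/-- Joint probability `p(xⁿ,yⁿ) = ∏ᵢ p(xᵢ,yᵢ)` of a pair of i.i.d. sequences. -/
noncomputable def jointSeqProb {X Y : Type*} (p : X × Y → ℝ) {n : ℕ}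
    (w : (Fin n → X) × (Fin n → Y)) : ℝ :=
  ∏ i, p (w.1 i, w.2 i)

/-- The typical set `𝒜_{ε,ε'}^{(n)}(X,Y)`: `f(xⁿ) ≤ ε`, `f(yⁿ) ≤ ε'`, `f(xⁿ,yⁿ) ≤ ε'`. -/
def typical {X Y : Type*} [Fintype X] [Fintype Y] (p : X × Y → ℝ)
    (ε ε' : ℝ) {n : ℕ} (w : (Fin n → X) × (Fin n → Y)) : Prop :=
  fdev (margFst p) w.1 ≤ ε ∧ fdev (margSnd p) w.2 ≤ ε' ∧ fdev p (pairSeq w) ≤ ε'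

/-- Conditional probability `ℙ[ (Xⁿ,Yⁿ) ∉ 𝒜_{ε,ε'}^{(n)}(X,Y) | Xⁿ = xⁿ ]`
(for `xⁿ` with `p(xⁿ) > 0`). -/
noncomputable def condNotTyp {X Y : Type*} [Fintype X] [Fintype Y] (p : X × Y → ℝ)
    (ε ε' : ℝ) {n : ℕ} (xn : Fin n → X) : ℝ :=
  (∑ yn ∈ Finset.univ.filter (fun yn : Fin n → Y => ¬ typical p ε ε' (xn, yn)),
      jointSeqProb p (xn, yn)) / seqProb (margFst p) xn

/-!
The complement of the restricted typical set is covered by three events. If `xⁿ` is not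
`ε`-typical, Chernoff's bound applies: on the upper tail `p(xⁿ) < 2^{-n(H(X)+ε)}`, Markov's
inequality for `p(xⁿ)^{-s/ln 2}`, whose mean is `(𝔼 p(X)^{-s/ln 2})ⁿ` by independence, gives
`e^{n(ln 𝔼 p(X)^{-s/ln 2} - s(H(X)+ε))}` for every `s > 0`, and symmetrically on the lower tail.
If `yⁿ` or `(xⁿ,yⁿ)` is atypical, the hypothesis gives `2^{-n b₁ ε}`. Finally, averaged over
`ε`-typical `xⁿ`, the conditional probability of atypicality given `xⁿ` is at most the probability
of that second event, so by Markov's inequality it exceeds `2^{-n b₀ ε}` with probability at most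
`2^{-n b₁ ε} / 2^{-n b₀ ε}`.
-/

theorem Finset.sum_filter_le_sum_filter_add {ι M : Type*} [AddCommMonoid M] [PartialOrder M]
    [IsOrderedAddMonoid M] (s : Finset ι) {f : ι → M} (hf : ∀ i ∈ s, 0 ≤ f i)
    {P Q R : ι → Prop} [DecidablePred P] [DecidablePred Q] [DecidablePred R]
    (h : ∀ i ∈ s, P i → Q i ∨ R i) :
    ∑ i ∈ s.filter P, f i ≤ ∑ i ∈ s.filter Q, f i + ∑ i ∈ s.filter R, f i := by
  rw [sum_filter, sum_filter, sum_filter, ← sum_add_distrib]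
  refine sum_le_sum fun i hi => ?_
  have := hf i hi
  have := h i hi
  split_ifs <;> simp_all [add_nonneg, le_add_of_nonneg_right]

theorem Finset.sum_le_sum_mul_div_of_le {ι : Type*} {s t : Finset ι} (hst : s ⊆ t)
    {f g : ι → ℝ} (hf : ∀ i ∈ t, 0 ≤ f i) (hg : ∀ i ∈ t, 0 ≤ g i) {c : ℝ} (hc : 0 < c)
    (hcg : ∀ i ∈ s, 0 < f i → c ≤ g i) :
    ∑ i ∈ s, f i ≤ (∑ i ∈ t, f i * g i) / c := by
  rw [le_div_iff₀ hc, sum_mul]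
  calc ∑ i ∈ s, f i * c ≤ ∑ i ∈ s, f i * g i := sum_le_sum fun i hi => ?_
    _ ≤ ∑ i ∈ t, f i * g i :=
      sum_le_sum_of_subset_of_nonneg hst fun i hi _ => mul_nonneg (hf i hi) (hg i hi)
  rcases (hf i (hst hi)).eq_or_lt with h0 | hpos
  · simp [← h0]
  · exact mul_le_mul_of_nonneg_left (hcg i hi hpos) hpos.le

namespace Real

theorem pow_le_exp_mul_log {x : ℝ} (hx : 0 ≤ x) (n : ℕ) : x ^ n ≤ exp (n * log x) := by
  rcases hx.eq_or_lt with rfl | hpos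
  · rcases n.eq_zero_or_pos with rfl | hn
    · simp
    · simp only [zero_pow hn.ne']
      exact (exp_pos _).le
  · rw [← log_pow, exp_log (pow_pos hpos n)]

theorem rpow_div_log_two {x : ℝ} (hx : 0 < x) (s : ℝ) : x ^ (s / log 2) = exp (s * logb 2 x) := by
  rw [rpow_def_of_pos hx, logb]
  ring_nf

theorem le_exp_mul_sInf_image {A : ℝ} {n : ℕ} {g : ℝ → ℝ} {S : Set ℝ} (hS : S.Nonempty)
    (h : ∀ s ∈ S, A ≤ exp (n * g s)) : A ≤ exp (n * sInf (g '' S)) := by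
  obtain ⟨s₀, hs₀⟩ := hS
  rcases n.eq_zero_or_pos with rfl | hn
  · simpa using h s₀ hs₀
  rcases le_or_gt A 0 with hA | hA
  · exact hA.trans (exp_pos _).le
  have hn' : (0 : ℝ) < n := by exact_mod_cast hn
  have hlow : log A / n ≤ sInf (g '' S) := by
    refine le_csInf ⟨g s₀, s₀, hs₀, rfl⟩ ?_
    rintro _ ⟨s, hs, rfl⟩
    rw [div_le_iff₀' hn']
    exact (log_le_iff_le_exp hA).mpr (h s hs)
  exact (log_le_iff_le_exp hA).mp ((div_le_iff₀' hn').mp hlow)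

end Real

section IID

variable {W : Type*} {q : W → ℝ}

theorem seqProb_nonneg (hq : ∀ x, 0 ≤ q x) {n : ℕ} (w : Fin n → W) : 0 ≤ seqProb q w :=
  prod_nonneg fun _ _ => hq _

variable [Fintype W]

theorem sum_filter_pos_rpow_one_add (hq : ∀ x, 0 ≤ q x) (t : ℝ) :
    ∑ x ∈ univ.filter (fun x => 0 < q x), q x ^ (1 + t) = ∑ x, q x * q x ^ t := by
  rw [sum_filter]
  refine sum_congr rfl fun x _ => ?_
  split_ifs with hx
  · rw [rpow_add hx, rpow_one]
  · simp [le_antisymm (not_lt.mp hx) (hq x)]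

theorem sum_seqProb_mul_rpow (hq : ∀ x, 0 ≤ q x) (n : ℕ) (t : ℝ) :
    ∑ w : Fin n → W, seqProb q w * seqProb q w ^ t
      = (∑ x ∈ univ.filter (fun x => 0 < q x), q x ^ (1 + t)) ^ n := by
  rw [sum_filter_pos_rpow_one_add hq, Fintype.sum_pow]
  refine sum_congr rfl fun w _ => ?_
  rw [seqProb, ← finsetProd_rpow _ _ (fun i _ => hq (w i)), ← prod_mul_distrib]

theorem sum_seqProb_le_exp_of_le_rpow (hq : ∀ x, 0 ≤ q x) {n : ℕ} (S : Finset (Fin n → W))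
    {t a : ℝ} (hS : ∀ w ∈ S, 0 < seqProb q w → exp (n * a) ≤ seqProb q w ^ t) :
    ∑ w ∈ S, seqProb q w
      ≤ exp (n * (log (∑ x ∈ univ.filter (fun x => 0 < q x), q x ^ (1 + t)) - a)) :=
  calc ∑ w ∈ S, seqProb q w ≤ (∑ w, seqProb q w * seqProb q w ^ t) / exp (n * a) :=
        sum_le_sum_mul_div_of_le (subset_univ S) (fun w _ => seqProb_nonneg hq w)
          (fun w _ => rpow_nonneg (seqProb_nonneg hq w) t) (exp_pos _) hS
    _ ≤ exp (n * log (∑ x ∈ univ.filter (fun x => 0 < q x), q x ^ (1 + t))) / exp (n * a) := by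
        rw [sum_seqProb_mul_rpow hq]
        gcongr
        exact pow_le_exp_mul_log (sum_nonneg fun x _ => rpow_nonneg (hq x) _) n
    _ = _ := by rw [← exp_sub, mul_sub]

theorem exp_le_seqProb_rpow_of_upper_tail {n : ℕ} {w : Fin n → W} (hw : 0 < seqProb q w)
    {ε s : ℝ} (hs : 0 ≤ s)
    (h : ε < -(1 / (n : ℝ)) * logb 2 (seqProb q w) - shannonEntropy q) :
    exp (n * (s * (shannonEntropy q + ε))) ≤ seqProb q w ^ (-s / log 2) := by
  rcases n.eq_zero_or_pos with rfl | hn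
  · simp [seqProb]
  have hn' : (0 : ℝ) < n := by exact_mod_cast hn
  have key : (n : ℝ) * (shannonEntropy q + ε) < -logb 2 (seqProb q w) := by
    have := mul_lt_mul_of_pos_left h hn'
    field_simp at this
    linarith
  rw [rpow_div_log_two hw, exp_le_exp]
  nlinarith [mul_le_mul_of_nonneg_left key.le hs]

theorem exp_le_seqProb_rpow_of_lower_tail {n : ℕ} {w : Fin n → W} (hw : 0 < seqProb q w)
    {ε s : ℝ} (hs : 0 ≤ s)
    (h : ε < -(-(1 / (n : ℝ)) * logb 2 (seqProb q w) - shannonEntropy q)) :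
    exp (n * (s * (-shannonEntropy q + ε))) ≤ seqProb q w ^ (s / log 2) := by
  rcases n.eq_zero_or_pos with rfl | hn
  · simp [seqProb]
  have hn' : (0 : ℝ) < n := by exact_mod_cast hn
  have key : (n : ℝ) * (-shannonEntropy q + ε) < logb 2 (seqProb q w) := by
    have := mul_lt_mul_of_pos_left h hn'
    field_simp at this
    linarith
  rw [rpow_div_log_two hw, exp_le_exp]
  nlinarith [mul_le_mul_of_nonneg_left key.le hs]

theorem sum_seqProb_upper_tail_le_exp_chernoff1 (hq : ∀ x, 0 ≤ q x) (ε : ℝ) (n : ℕ) :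
    ∑ w ∈ univ.filter (fun w : Fin n → W =>
        ε < -(1 / (n : ℝ)) * logb 2 (seqProb q w) - shannonEntropy q), seqProb q w
      ≤ exp (n * chernoff1 q ε) :=
  le_exp_mul_sInf_image Set.nonempty_Ioi fun s hs => by
    have := sum_seqProb_le_exp_of_le_rpow hq (n := n) (univ.filter _) (t := -s / log 2)
      (a := s * (shannonEntropy q + ε))
      fun _ hw hpos => exp_le_seqProb_rpow_of_upper_tail hpos (le_of_lt hs) (mem_filter.mp hw).2
    rwa [neg_div, ← sub_eq_add_neg] at this

theorem sum_seqProb_lower_tail_le_exp_chernoff2 (hq : ∀ x, 0 ≤ q x) (ε : ℝ) (n : ℕ) :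
    ∑ w ∈ univ.filter (fun w : Fin n → W =>
        ε < -(-(1 / (n : ℝ)) * logb 2 (seqProb q w) - shannonEntropy q)), seqProb q w
      ≤ exp (n * chernoff2 q ε) :=
  le_exp_mul_sInf_image Set.nonempty_Ioi fun s hs =>
    sum_seqProb_le_exp_of_le_rpow hq (n := n) (univ.filter _) (t := s / log 2)
      (a := s * (-shannonEntropy q + ε))
      fun _ hw hpos => exp_le_seqProb_rpow_of_lower_tail hpos (le_of_lt hs) (mem_filter.mp hw).2

theorem sum_seqProb_fdev_gt_le (hq : ∀ x, 0 ≤ q x) (ε : ℝ) (n : ℕ) :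
    ∑ w ∈ univ.filter (fun w : Fin n → W => ε < fdev q w), seqProb q w
      ≤ exp (n * chernoff1 q ε) + exp (n * chernoff2 q ε) :=
  (sum_filter_le_sum_filter_add _ (fun w _ => seqProb_nonneg hq w)
      fun _ _ h => lt_abs.mp h).trans
    (add_le_add (sum_seqProb_upper_tail_le_exp_chernoff1 hq ε n)
      (sum_seqProb_lower_tail_le_exp_chernoff2 hq ε n))

end IID

section Joint

variable {X Y : Type*} {p : X × Y → ℝ} {n : ℕ}

theorem jointSeqProb_nonneg (hp : ∀ xy, 0 ≤ p xy) (w : (Fin n → X) × (Fin n → Y)) :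
    0 ≤ jointSeqProb p w :=
  prod_nonneg fun _ _ => hp _

variable [Fintype Y]

theorem margFst_nonneg (hp : ∀ xy, 0 ≤ p xy) (x : X) : 0 ≤ margFst p x :=
  sum_nonneg fun _ _ => hp _

theorem sum_jointSeqProb_snd (p : X × Y → ℝ) (xn : Fin n → X) :
    ∑ yn : Fin n → Y, jointSeqProb p (xn, yn) = seqProb (margFst p) xn :=
  (Fintype.prod_sum fun i (y : Y) => p (xn i, y)).symm

variable [Fintype X]

theorem sum_filter_fst_jointSeqProb (p : X × Y → ℝ) (P : (Fin n → X) → Prop) [DecidablePred P] :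
    ∑ w ∈ univ.filter (fun w : (Fin n → X) × (Fin n → Y) => P w.1), jointSeqProb p w
      = ∑ xn ∈ univ.filter P, seqProb (margFst p) xn := by
  rw [sum_filter, sum_filter, Fintype.sum_prod_type]
  refine sum_congr rfl fun xn _ => ?_
  split_ifs
  · exact sum_jointSeqProb_snd p xn
  · exact sum_const_zero

theorem condNotTyp_nonneg (hp : ∀ xy, 0 ≤ p xy) (ε ε' : ℝ) (xn : Fin n → X) :
    0 ≤ condNotTyp p ε ε' xn :=
  div_nonneg (sum_nonneg fun _ _ => jointSeqProb_nonneg hp _)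
    (seqProb_nonneg (margFst_nonneg hp) xn)

theorem seqProb_mul_condNotTyp_le (hp : ∀ xy, 0 ≤ p xy) (ε ε' : ℝ) (xn : Fin n → X) :
    seqProb (margFst p) xn * condNotTyp p ε ε' xn
      ≤ ∑ yn ∈ univ.filter (fun yn : Fin n → Y => ¬ typical p ε ε' (xn, yn)),
          jointSeqProb p (xn, yn) := by
  rw [condNotTyp]
  rcases eq_or_ne (seqProb (margFst p) xn) 0 with h | h
  · rw [h, zero_mul]
    exact sum_nonneg fun _ _ => jointSeqProb_nonneg hp _
  · rw [mul_div_cancel₀ _ h]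

theorem fdev_gt_of_not_typical {ε ε' : ℝ} {w : (Fin n → X) × (Fin n → Y)}
    (hx : fdev (margFst p) w.1 ≤ ε) (h : ¬ typical p ε ε' w) :
    fdev (margSnd p) w.2 > ε' ∨ fdev p (pairSeq w) > ε' := by
  simp only [typical, not_and_or, not_le] at h
  rcases h with h | h | h
  · exact absurd hx h.not_ge
  · exact Or.inl h
  · exact Or.inr h

theorem lt_fdev_or_of_not_typical_and_condNotTyp_le {ε ε' c : ℝ}
    {w : (Fin n → X) × (Fin n → Y)} (h : ¬ (typical p ε ε' w ∧ condNotTyp p ε ε' w.1 ≤ c)) :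
    ε < fdev (margFst p) w.1 ∨ ((fdev (margSnd p) w.2 > ε' ∨ fdev p (pairSeq w) > ε') ∨
      (typical p ε ε' w ∧ c < condNotTyp p ε ε' w.1)) := by
  by_cases ht : typical p ε ε' w
  · exact Or.inr (Or.inr ⟨ht, not_le.mp fun hc => h ⟨ht, hc⟩⟩)
  by_cases hx : fdev (margFst p) w.1 ≤ ε
  · exact Or.inr (Or.inl (fdev_gt_of_not_typical hx ht))
  · exact Or.inl (not_le.mp hx)

theorem sum_typical_condNotTyp_gt_le (hp : ∀ xy, 0 ≤ p xy) {ε ε' c : ℝ} (hc : 0 < c) :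
    ∑ w ∈ univ.filter (fun w : (Fin n → X) × (Fin n → Y) =>
        typical p ε ε' w ∧ c < condNotTyp p ε ε' w.1), jointSeqProb p w
      ≤ (∑ w ∈ univ.filter (fun w : (Fin n → X) × (Fin n → Y) =>
          fdev (margSnd p) w.2 > ε' ∨ fdev p (pairSeq w) > ε'), jointSeqProb p w) / c :=
  calc _ ≤ ∑ w ∈ univ.filter (fun w : (Fin n → X) × (Fin n → Y) =>
          fdev (margFst p) w.1 ≤ ε ∧ c < condNotTyp p ε ε' w.1), jointSeqProb p w :=
        sum_le_sum_of_subset_of_nonneg (monotone_filter_right _ fun _ _ h => ⟨h.1.1, h.2⟩)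
          fun w _ _ => jointSeqProb_nonneg hp w
    _ = ∑ xn ∈ univ.filter (fun xn : Fin n → X =>
            fdev (margFst p) xn ≤ ε ∧ c < condNotTyp p ε ε' xn), seqProb (margFst p) xn :=
        sum_filter_fst_jointSeqProb p fun xn => fdev (margFst p) xn ≤ ε ∧ c < condNotTyp p ε ε' xn
    _ ≤ (∑ xn ∈ univ.filter (fun xn : Fin n → X => fdev (margFst p) xn ≤ ε),
          seqProb (margFst p) xn * condNotTyp p ε ε' xn) / c :=
        sum_le_sum_mul_div_of_le (monotone_filter_right _ fun _ _ h => h.1)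
          (fun xn _ => seqProb_nonneg (margFst_nonneg hp) xn)
          (fun xn _ => condNotTyp_nonneg hp ε ε' xn) hc
          fun _ hxn _ => (mem_filter.mp hxn).2.2.le
    _ ≤ (∑ w ∈ univ.filter (fun w : (Fin n → X) × (Fin n → Y) =>
          fdev (margFst p) w.1 ≤ ε ∧ ¬ typical p ε ε' w), jointSeqProb p w) / c := by
        gcongr
        rw [sum_filter, sum_filter, Fintype.sum_prod_type]
        refine sum_le_sum fun xn _ => ?_
        split_ifs with hx
        · simpa only [hx, true_and, ← sum_filter] using seqProb_mul_condNotTyp_le hp ε ε' xn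
        · simp [hx]
    _ ≤ _ := div_le_div_of_nonneg_right (sum_le_sum_of_subset_of_nonneg
          (monotone_filter_right _ fun _ _ h => fdev_gt_of_not_typical h.1 h.2)
          fun w _ _ => jointSeqProb_nonneg hp w) hc.le

end Joint

theorem prob_not_restricted_typical_bound_general
    {X Y : Type*} [Fintype X] [Fintype Y] (p : X × Y → ℝ)
    (hp : ∀ xy, 0 ≤ p xy)
    (n : ℕ) (ε ε' b₀ b₁ : ℝ)
    (hhyp : ∑ w ∈ Finset.univ.filter (fun w : (Fin n → X) × (Fin n → Y) =>
          fdev (margSnd p) w.2 > ε' ∨ fdev p (pairSeq w) > ε'),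
        jointSeqProb p w ≤ (2 : ℝ) ^ (-((n : ℝ) * b₁ * ε))) :
    ∑ w ∈ Finset.univ.filter (fun w : (Fin n → X) × (Fin n → Y) =>
          ¬ (typical p ε ε' w ∧
              condNotTyp p ε ε' w.1 ≤ (2 : ℝ) ^ (-((n : ℝ) * b₀ * ε)))),
        jointSeqProb p w
      ≤ Real.exp ((n : ℝ) * chernoff1 (margFst p) ε)
        + Real.exp ((n : ℝ) * chernoff2 (margFst p) ε)
        + (2 : ℝ) ^ (-((n : ℝ) * b₁ * ε))
        + (2 : ℝ) ^ (-((n : ℝ) * (b₁ - b₀) * ε)) := by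
  set c₀ : ℝ := 2 ^ (-((n : ℝ) * b₀ * ε))
  have hc₀ : 0 < c₀ := by positivity
  have hratio : (2 : ℝ) ^ (-((n : ℝ) * b₁ * ε)) / c₀ = 2 ^ (-((n : ℝ) * (b₁ - b₀) * ε)) := by
    rw [← rpow_sub two_pos]
    ring_nf
  have hnn (w : (Fin n → X) × (Fin n → Y)) (_ : w ∈ univ) : 0 ≤ jointSeqProb p w :=
    jointSeqProb_nonneg hp w
  calc _ ≤ _ := sum_filter_le_sum_filter_add _ hnn
          fun _ _ => lt_fdev_or_of_not_typical_and_condNotTyp_le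
    _ ≤ _ := add_le_add_right (sum_filter_le_sum_filter_add _ hnn fun _ _ h => h) _
    _ ≤ (exp (n * chernoff1 (margFst p) ε) + exp (n * chernoff2 (margFst p) ε))
          + (2 ^ (-((n : ℝ) * b₁ * ε)) + 2 ^ (-((n : ℝ) * b₁ * ε)) / c₀) :=
        add_le_add
          ((sum_filter_fst_jointSeqProb p _).trans_le
            (sum_seqProb_fdev_gt_le (margFst_nonneg hp) ε n))
          (add_le_add hhyp
            ((sum_typical_condNotTyp_gt_le hp hc₀).trans (div_le_div_of_nonneg_right hhyp hc₀.le)))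
    _ = _ := by rw [hratio]; ring

/-- With the restricted typical set
`𝒜̂_{ε,ε'}^{(n)}(X,Y) = { (xⁿ,yⁿ) ∈ 𝒜_{ε,ε'}^{(n)} :
ℙ[ (Xⁿ,Yⁿ) ∉ 𝒜_{ε,ε'}^{(n)} | Xⁿ = xⁿ ] ≤ 2^{−n b₀ ε} }`, if
`ℙ[ f(Yⁿ) > ε' or f(Xⁿ,Yⁿ) > ε' ] ≤ 2^{−n b₁ ε}`, then
`ℙ[ (Xⁿ,Yⁿ) ∉ 𝒜̂ ] ≤ e^{n C_X^{(1)}(ε)} + e^{n C_X^{(2)}(ε)} + 2^{−n b₁ ε} + 2^{−n(b₁−b₀)ε}`. -/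
theorem prob_not_restricted_typical_bound
    {X Y : Type*} [Fintype X] [Fintype Y] (p : X × Y → ℝ)
    (hp : ∀ xy, 0 ≤ p xy) (hsum : ∑ xy, p xy = 1)
    (n : ℕ) (ε ε' b₀ b₁ : ℝ) (hε : 0 < ε) (hε' : 0 < ε') (hb₀ : 0 < b₀) (hb₁ : b₀ < b₁)
    (hhyp : ∑ w ∈ Finset.univ.filter (fun w : (Fin n → X) × (Fin n → Y) =>
          fdev (margSnd p) w.2 > ε' ∨ fdev p (pairSeq w) > ε'),
        jointSeqProb p w ≤ (2 : ℝ) ^ (-((n : ℝ) * b₁ * ε))) :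
    ∑ w ∈ Finset.univ.filter (fun w : (Fin n → X) × (Fin n → Y) =>
          ¬ (typical p ε ε' w ∧
              condNotTyp p ε ε' w.1 ≤ (2 : ℝ) ^ (-((n : ℝ) * b₀ * ε)))),
        jointSeqProb p w
      ≤ Real.exp ((n : ℝ) * chernoff1 (margFst p) ε)
        + Real.exp ((n : ℝ) * chernoff2 (margFst p) ε)
        + (2 : ℝ) ^ (-((n : ℝ) * b₁ * ε))
        + (2 : ℝ) ^ (-((n : ℝ) * (b₁ - b₀) * ε)) :=
  prob_not_restricted_typical_bound_general p hp n ε ε' b₀ b₁ hhyp
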